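/- Let G be a finite cyclic group and let f : C → D be a chain map of chain complexes of ℤ[G]-modules. Then f is an fp-equivalence (i.e., for every subgroup H ≤ G the induced chain map f^H : C^H → D^H on H-fixed points is a quasi-isomorphism) if and only if f is a cfp-equivalence (i.e., for every subgroup H ≤ G the induced chain map f_H : C_H → D_H on H-cofixed points is a quasi-isomorphism). -/

import Mathlib

open CategoryTheory

variable {G : Type} [Group G]

/-- The underlying additive monoid homomorphism of a morphism of `ℤ[G]`-modules. -/
def repHomToAdd {V W : Rep.{0} ℤ G} (f : V ⟶ W) : V →+ W :=
  AddMonoidHom.mk' f.hom (map_add f.hom)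

/-- The subgroup of `H`-invariants (`H`-fixed points) of a `ℤ[G]`-module. -/
def invSub (H : Subgroup G) (V : Rep.{0} ℤ G) : AddSubgroup V where
  carrier := {x | ∀ σ ∈ H, V.ρ σ x = x}
  zero_mem' := fun σ _ => map_zero _
  add_mem' := fun ha hb σ hσ => by rw [map_add, ha σ hσ, hb σ hσ]
  neg_mem' := fun ha σ hσ => by rw [map_neg, ha σ hσ]

/-- The subgroup generated by the elements `v - σ • v` for `σ ∈ H`. -/
noncomputable def coinvSub (H : Subgroup G) (V : Rep.{0} ℤ G) : AddSubgroup V :=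
  AddSubgroup.closure {x | ∃ (v : V) (σ : G), σ ∈ H ∧ x = v - V.ρ σ v}

/-- The `H`-fixed points functor on `ℤ[G]`-modules. -/
noncomputable def invFunctor (H : Subgroup G) : Rep.{0} ℤ G ⥤ AddCommGrpCat where
  obj V := AddCommGrpCat.of (invSub H V)
  map {V W} f := AddCommGrpCat.ofHom <| AddMonoidHom.codRestrict
    ((repHomToAdd f).domRestrict (invSub H V)) (invSub H W)
    (fun x σ hσ => by
      simp only [repHomToAdd, AddMonoidHom.domRestrict_apply, AddMonoidHom.mk'_apply]
      rw [← Rep.hom_comm_apply, x.2 σ hσ])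
  map_id V := by ext x; rfl
  map_comp f g := by ext x; rfl

/-- The `H`-cofixed points functor on `ℤ[G]`-modules. -/
noncomputable def coinvFunctor (H : Subgroup G) : Rep.{0} ℤ G ⥤ AddCommGrpCat where
  obj V := AddCommGrpCat.of (V ⧸ coinvSub H V)
  map {V W} f := AddCommGrpCat.ofHom <| QuotientAddGroup.map _ _ (repHomToAdd f) (by
    rw [coinvSub, AddSubgroup.closure_le]
    rintro x ⟨v, σ, hσ, rfl⟩
    simp only [SetLike.mem_coe, AddSubgroup.mem_comap, map_sub]
    refine AddSubgroup.subset_closure ⟨f.hom v, σ, hσ, ?_⟩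
    simp only [repHomToAdd, AddMonoidHom.mk'_apply]
    rw [Rep.hom_comm_apply])
  map_id V := by
    ext x
    refine QuotientAddGroup.induction_on (s := coinvSub H V) x (fun v => ?_)
    rfl
  map_comp {X Y Z} f g := by
    ext x
    refine QuotientAddGroup.induction_on (s := coinvSub H X) x (fun v => ?_)
    rfl

instance (H : Subgroup G) : (invFunctor H).Additive where
  map_add {X Y f g} := by
    ext x
    exact Subtype.ext (congrArg (fun h => h (x : invSub H X).1) (Rep.add_hom f g))

instance (H : Subgroup G) : (coinvFunctor H).Additive where
  map_add {X Y f g} := by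
    ext x
    refine QuotientAddGroup.induction_on (s := coinvSub H X) x (fun v => ?_)
    show QuotientAddGroup.mk ((f + g).hom v) = _
    erw [Rep.add_hom f g]
    rfl

/-- The forgetful functor to abelian groups. -/
noncomputable def forgetAdd : Rep.{0} ℤ G ⥤ AddCommGrpCat where
  obj V := AddCommGrpCat.of V
  map f := AddCommGrpCat.ofHom (repHomToAdd f)
  map_id V := by ext x; rfl
  map_comp f g := by ext x; rfl

instance : (forgetAdd (G := G)).Additive where
  map_add {X Y f g} := by
    ext x
    exact congrArg (fun h => h x) (Rep.add_hom f g)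

/-- The additive endomorphism `1 - ρ σ`. -/
noncomputable def dAdd (σ : G) (V : Rep.{0} ℤ G) : V →+ V :=
  AddMonoidHom.mk' (fun v => v - V.ρ σ v) (fun a b => by
    show (a + b) - V.ρ σ (a + b) = (a - V.ρ σ a) + (b - V.ρ σ b)
    rw [map_add]; abel)

lemma dAdd_natural {V W : Rep.{0} ℤ G} (f : V ⟶ W) (σ : G) (v : V) :
    f.hom (dAdd σ V v) = dAdd σ W (f.hom v) := by
  simp only [dAdd, AddMonoidHom.mk'_apply]
  rw [map_sub, Rep.hom_comm_apply]

/-- The image functor of `1 - ρ σ`. -/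
noncomputable def ranF (σ : G) : Rep.{0} ℤ G ⥤ AddCommGrpCat where
  obj V := AddCommGrpCat.of (dAdd σ V).range
  map {V W} f := AddCommGrpCat.ofHom <| AddMonoidHom.codRestrict
    ((repHomToAdd f).domRestrict (dAdd σ V).range) (dAdd σ W).range
    (by rintro ⟨x, v, rfl⟩; exact ⟨f.hom v, (dAdd_natural f σ v).symm⟩)
  map_id V := by ext x; rfl
  map_comp f g := by ext x; rfl

instance (σ : G) : (ranF σ).Additive where
  map_add {X Y f g} := by
    ext x
    exact Subtype.ext (congrArg (fun h => h (x : (dAdd σ X).range).1) (Rep.add_hom f g))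

lemma fix_of_pow {V : Rep.{0} ℤ G} {σ τ : G} (hτ : τ ∈ Submonoid.powers σ) {v : V}
    (h : V.ρ σ v = v) : V.ρ τ v = v := by
  obtain ⟨n, rfl⟩ := hτ
  rw [map_pow]
  induction n with
  | zero => simp
  | succ n ih =>
      have h2 : (V.ρ σ ^ (n + 1)) v = (V.ρ σ ^ n) (V.ρ σ v) := by rw [pow_succ]; rfl
      rw [h2, h, ih]

lemma sub_pow_mem_range (σ : G) (V : Rep.{0} ℤ G) (v : V) (n : ℕ) :
    v - V.ρ (σ ^ n) v ∈ (dAdd σ V).range := by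
  induction n with
  | zero =>
      rw [pow_zero, map_one]
      show v - v ∈ _
      rw [sub_self]; exact zero_mem _
  | succ n ih =>
      have h2 : V.ρ (σ ^ (n + 1)) v = V.ρ σ (V.ρ (σ ^ n) v) := by
        rw [pow_succ', map_mul]; rfl
      have : v - V.ρ (σ ^ (n + 1)) v
          = (v - V.ρ (σ ^ n) v) + dAdd σ V (V.ρ (σ ^ n) v) := by
        simp only [dAdd, AddMonoidHom.mk'_apply]
        rw [h2]; abel
      rw [this]
      exact add_mem ih ⟨_, rfl⟩

lemma exists_gen [Finite G] [IsCyclic G] (H : Subgroup G) :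
    ∃ σ : G, σ ∈ H ∧ ∀ τ ∈ H, τ ∈ Submonoid.powers σ := by
  obtain ⟨g, hg⟩ := IsCyclic.exists_generator (α := H)
  refine ⟨g.1, g.2, fun τ hτ => ?_⟩
  obtain ⟨n, hn⟩ := Subgroup.mem_zpowers_iff.1 (hg ⟨τ, hτ⟩)
  have : τ ∈ Subgroup.zpowers g.1 :=
    Subgroup.mem_zpowers_iff.2 ⟨n, by
      rw [← SubgroupClass.coe_zpow]; exact congrArg Subtype.val hn⟩
  exact mem_powers_iff_mem_zpowers.2 this

/-- Inclusion of invariants. -/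
noncomputable def incInv (H : Subgroup G) : invFunctor H ⟶ forgetAdd (G := G) where
  app V := AddCommGrpCat.ofHom (invSub H V).subtype
  naturality {V W} f := by ext x; rfl

/-- Corestriction of `1 - ρ σ` onto its image. -/
noncomputable def projRan (σ : G) : forgetAdd (G := G) ⟶ ranF σ where
  app V := AddCommGrpCat.ofHom (dAdd σ V).rangeRestrict
  naturality {V W} f := by
    ext v
    exact Subtype.ext (dAdd_natural f σ v).symm

/-- Inclusion of the image of `1 - ρ σ`. -/
noncomputable def incRan (σ : G) : ranF σ ⟶ forgetAdd (G := G) where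
  app V := AddCommGrpCat.ofHom (dAdd σ V).range.subtype
  naturality {V W} f := by ext x; rfl

/-- Projection onto coinvariants. -/
noncomputable def projCoinv (H : Subgroup G) : forgetAdd (G := G) ⟶ coinvFunctor H where
  app V := AddCommGrpCat.ofHom (QuotientAddGroup.mk' (coinvSub H V))
  naturality {V W} f := by ext v; rfl

/-- Invariants for the trivial subgroup are the identity. -/
noncomputable def invBotIso : invFunctor (⊥ : Subgroup G) ≅ forgetAdd (G := G) :=
  NatIso.ofComponents
    (fun V =>
      { hom := AddCommGrpCat.ofHom (invSub ⊥ V).subtype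
        inv := AddCommGrpCat.ofHom <| AddMonoidHom.mk'
          (fun v => (⟨v, by
            rintro τ hτ
            rw [Subgroup.mem_bot] at hτ
            subst hτ
            rw [map_one]
            rfl⟩ : invSub (⊥ : Subgroup G) V))
          (fun a b => rfl)
        hom_inv_id := by ext x; exact Subtype.ext rfl
        inv_hom_id := by ext x; rfl })
    (fun {V W} f => by ext x; rfl)

lemma coinvSub_bot (V : Rep.{0} ℤ G) : coinvSub (⊥ : Subgroup G) V = ⊥ := by
  rw [coinvSub, eq_bot_iff, AddSubgroup.closure_le]
  rintro x ⟨v, τ, hτ, rfl⟩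
  rw [Subgroup.mem_bot] at hτ
  subst hτ
  rw [map_one]
  show v - v ∈ _
  rw [sub_self]
  exact zero_mem _

/-- Coinvariants for the trivial subgroup are the identity. -/
noncomputable def coinvBotIso : coinvFunctor (⊥ : Subgroup G) ≅ forgetAdd (G := G) :=
  NatIso.ofComponents
    (fun V =>
      { hom := AddCommGrpCat.ofHom <| QuotientAddGroup.lift _ (AddMonoidHom.id _)
          (fun x hx => by rw [coinvSub_bot, AddSubgroup.mem_bot] at hx; exact hx)
        inv := AddCommGrpCat.ofHom (QuotientAddGroup.mk' (coinvSub ⊥ V))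
        hom_inv_id := by
          ext x
          refine QuotientAddGroup.induction_on (s := coinvSub ⊥ V) x (fun v => ?_)
          rfl
        inv_hom_id := by ext x; rfl })
    (fun {V W} f => by
      ext x
      refine QuotientAddGroup.induction_on (s := coinvSub ⊥ V) x (fun v => ?_)
      rfl)

open HomologicalComplex HomologySequence in
lemma quasiIso_tau1 {A : Type*} [Category A] [Abelian A]
    {S₁ S₂ : ShortComplex (HomologicalComplex A (ComplexShape.down ℤ))}
    (φ : S₁ ⟶ S₂) (hS₁ : S₁.ShortExact) (hS₂ : S₂.ShortExact)
    (h₂ : QuasiIso φ.τ₂) (h₃ : QuasiIso φ.τ₃) : QuasiIso φ.τ₁ := by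
  rw [quasiIso_iff]
  intro j
  rw [quasiIsoAt_iff_isIso_homologyMap]
  have hij : (ComplexShape.down ℤ).Rel (j + 1) j := by simp
  have H5 := Abelian.isIso_of_epi_of_isIso_of_isIso_of_mono
    (composableArrows₅_exact hS₁ (j + 1) j hij).δ₀
    (composableArrows₅_exact hS₂ (j + 1) j hij).δ₀
    (ComposableArrows.δ₀Functor.map (mapComposableArrows₅ φ hS₁ hS₂ (j + 1) j hij))
    ((inferInstance : Epi (homologyMap φ.τ₂ (j + 1))))
    ((inferInstance : IsIso (homologyMap φ.τ₃ (j + 1))))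
    ((inferInstance : IsIso (homologyMap φ.τ₂ j)))
    ((inferInstance : Mono (homologyMap φ.τ₃ j)))
  exact H5

section SES

variable (H : Subgroup G) (σ : G)

/-- First short exact sequence: invariants, module, image of `1 - ρ σ`. -/
noncomputable def S1 (hσ : σ ∈ H) (X : ChainComplex (Rep.{0} ℤ G) ℤ) :
    ShortComplex (HomologicalComplex AddCommGrpCat (ComplexShape.down ℤ)) :=
  ShortComplex.mk ((NatTrans.mapHomologicalComplex (incInv H) _).app X)
    ((NatTrans.mapHomologicalComplex (projRan σ) _).app X) (by
      ext n x
      exact Subtype.ext (by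
        show x.1 - (X.X n).ρ σ x.1 = 0
        rw [x.2 σ hσ, sub_self]))

/-- Second short exact sequence: image of `1 - ρ σ`, module, coinvariants. -/
noncomputable def S2 (hσ : σ ∈ H) (X : ChainComplex (Rep.{0} ℤ G) ℤ) :
    ShortComplex (HomologicalComplex AddCommGrpCat (ComplexShape.down ℤ)) :=
  ShortComplex.mk ((NatTrans.mapHomologicalComplex (incRan σ) _).app X)
    ((NatTrans.mapHomologicalComplex (projCoinv H) _).app X) (by
      ext n x
      obtain ⟨x, v, rfl⟩ := x
      show QuotientAddGroup.mk' (coinvSub H (X.X n)) (dAdd σ (X.X n) v) = 0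
      exact (QuotientAddGroup.eq_zero_iff _).2
        (AddSubgroup.subset_closure ⟨v, σ, hσ, rfl⟩))


lemma S1_shortExact (hσ : σ ∈ H) (hpow : ∀ τ ∈ H, τ ∈ Submonoid.powers σ)
    (X : ChainComplex (Rep.{0} ℤ G) ℤ) : (S1 H σ hσ X).ShortExact := by
  rw [HomologicalComplex.shortExact_iff_degreewise_shortExact]
  intro n
  refine { exact := ?_, mono_f := ?_, epi_g := ?_ }
  · rw [ShortComplex.ab_exact_iff]
    intro x hx
    change (X.X n : Type) at x
    have hfix : (X.X n).ρ σ x = x := by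
      have h2 : x - (X.X n).ρ σ x = 0 := congrArg Subtype.val hx
      rw [sub_eq_zero] at h2
      exact h2.symm
    exact ⟨⟨x, fun τ hτ => fix_of_pow (hpow τ hτ) hfix⟩, rfl⟩
  · rw [AddCommGrpCat.mono_iff_injective]
    exact Subtype.val_injective
  · rw [AddCommGrpCat.epi_iff_surjective]
    exact (dAdd σ (X.X n)).rangeRestrict_surjective

lemma S2_shortExact (hσ : σ ∈ H) (hpow : ∀ τ ∈ H, τ ∈ Submonoid.powers σ)
    (X : ChainComplex (Rep.{0} ℤ G) ℤ) : (S2 H σ hσ X).ShortExact := by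
  rw [HomologicalComplex.shortExact_iff_degreewise_shortExact]
  intro n
  have hle : coinvSub H (X.X n) ≤ (dAdd σ (X.X n)).range := by
    rw [coinvSub, AddSubgroup.closure_le]
    rintro x ⟨v, τ, hτ, rfl⟩
    obtain ⟨m, rfl⟩ := hpow τ hτ
    exact sub_pow_mem_range σ (X.X n) v m
  refine { exact := ?_, mono_f := ?_, epi_g := ?_ }
  · rw [ShortComplex.ab_exact_iff]
    intro x hx
    change (X.X n : Type) at x
    have hmem : x ∈ coinvSub H (X.X n) := by
      have := QuotientAddGroup.eq.1 hx
      exact neg_mem_iff.1 (by simpa using this)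
    obtain ⟨v, hv⟩ := hle hmem
    exact ⟨⟨x, v, hv⟩, rfl⟩
  · rw [AddCommGrpCat.mono_iff_injective]
    exact Subtype.val_injective
  · rw [AddCommGrpCat.epi_iff_surjective]
    exact QuotientAddGroup.mk_surjective


/-- The morphism between first short exact sequences induced by `f`. -/
noncomputable def phi1 (hσ : σ ∈ H) {C D : ChainComplex (Rep.{0} ℤ G) ℤ} (f : C ⟶ D) :
    S1 H σ hσ C ⟶ S1 H σ hσ D where
  τ₁ := ((invFunctor H).mapHomologicalComplex _).map f
  τ₂ := ((forgetAdd (G := G)).mapHomologicalComplex _).map f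
  τ₃ := ((ranF σ).mapHomologicalComplex _).map f
  comm₁₂ := NatTrans.mapHomologicalComplex_naturality (incInv H) f
  comm₂₃ := NatTrans.mapHomologicalComplex_naturality (projRan σ) f

/-- The morphism between second short exact sequences induced by `f`. -/
noncomputable def phi2 (hσ : σ ∈ H) {C D : ChainComplex (Rep.{0} ℤ G) ℤ} (f : C ⟶ D) :
    S2 H σ hσ C ⟶ S2 H σ hσ D where
  τ₁ := ((ranF σ).mapHomologicalComplex _).map f
  τ₂ := ((forgetAdd (G := G)).mapHomologicalComplex _).map f
  τ₃ := ((coinvFunctor H).mapHomologicalComplex _).map f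
  comm₁₂ := NatTrans.mapHomologicalComplex_naturality (incRan σ) f
  comm₂₃ := NatTrans.mapHomologicalComplex_naturality (projCoinv H) f

end SES

/-- Let `G` be a finite cyclic group and `f : C ⟶ D` a chain map of chain
complexes of `ℤ[G]`-modules.  Then `f` is an fp-equivalence (for every subgroup `H ≤ G` the
induced chain map on `H`-fixed points is a quasi-isomorphism) if and only if `f` is a
cfp-equivalence (for every subgroup `H ≤ G` the induced chain map on `H`-cofixed points is a
quasi-isomorphism). -/
theorem stmt_7 (G : Type) [Group G] [Finite G] [IsCyclic G]
    (C D : ChainComplex (Rep.{0} ℤ G) ℤ) (f : C ⟶ D) :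
    (∀ H : Subgroup G,
      QuasiIso (((invFunctor H).mapHomologicalComplex (ComplexShape.down ℤ)).map f)) ↔
    (∀ H : Subgroup G,
      QuasiIso (((coinvFunctor H).mapHomologicalComplex (ComplexShape.down ℤ)).map f)) := by
  constructor
  · intro h H
    obtain ⟨σ, hσ, hpow⟩ := exists_gen H
    have hb : QuasiIso
        (((forgetAdd (G := G)).mapHomologicalComplex (ComplexShape.down ℤ)).map f) := by
      exact (quasiIso_iff_of_arrow_mk_iso _ _
        (Arrow.isoMk
          ((NatIso.mapHomologicalComplex invBotIso (ComplexShape.down ℤ)).app C)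
          ((NatIso.mapHomologicalComplex invBotIso (ComplexShape.down ℤ)).app D)
          (((NatIso.mapHomologicalComplex invBotIso (ComplexShape.down ℤ)).hom.naturality
            f).symm))).1 (h ⊥)
    have h3 : QuasiIso (((ranF σ).mapHomologicalComplex (ComplexShape.down ℤ)).map f) :=
      HomologicalComplex.HomologySequence.quasiIso_τ₃ (phi1 H σ hσ f)
        (S1_shortExact H σ hσ hpow C) (S1_shortExact H σ hσ hpow D) (h H) hb
    exact HomologicalComplex.HomologySequence.quasiIso_τ₃ (phi2 H σ hσ f)
      (S2_shortExact H σ hσ hpow C) (S2_shortExact H σ hσ hpow D) h3 hb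
  · intro h H
    obtain ⟨σ, hσ, hpow⟩ := exists_gen H
    have hb : QuasiIso
        (((forgetAdd (G := G)).mapHomologicalComplex (ComplexShape.down ℤ)).map f) := by
      exact (quasiIso_iff_of_arrow_mk_iso _ _
        (Arrow.isoMk
          ((NatIso.mapHomologicalComplex coinvBotIso (ComplexShape.down ℤ)).app C)
          ((NatIso.mapHomologicalComplex coinvBotIso (ComplexShape.down ℤ)).app D)
          (((NatIso.mapHomologicalComplex coinvBotIso (ComplexShape.down ℤ)).hom.naturality
            f).symm))).1 (h ⊥)
    have h3 : QuasiIso (((ranF σ).mapHomologicalComplex (ComplexShape.down ℤ)).map f) :=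
      quasiIso_tau1 (phi2 H σ hσ f)
        (S2_shortExact H σ hσ hpow C) (S2_shortExact H σ hσ hpow D) hb (h H)
    exact quasiIso_tau1 (phi1 H σ hσ f)
      (S1_shortExact H σ hσ hpow C) (S1_shortExact H σ hσ hpow D) hb h3
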